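/- The function h_H^{(3)}(p) = (1/6)·(h_B^{(3)}(p) + (p₀ + 2(p₀+2p₁+p₂)³)·ln 2), over the simplex {p_i > 0, p₀+3p₁+3p₂+p₃=1}, attains a value strictly greater than 0.4303 at p = (0.504, 0.110, 0.048, 0.021) normalized appropriately; in particular sup h_H^{(3)} > max_p (1/2)(h_B(p)+(1−p)³ln 2) − 0.003. -/

import Mathlib

/-! The witness `p = (2⁶/5³, 3³/(2·5³), 2·3/5³, 1/(2·5²))` is `5`-smooth, so every logarithm
in `hH3 p` is an integer combination of `log 2`, `log 3`, `log 5`, which Mathlib bounds to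
`10⁻¹⁰`.

Since `½ · 0.8666 - 0.003 = 0.4303`, the comparison follows from
`hB q + (1 - q)³ log 2 ≤ 0.8666` on `(0, 1)`. Gibbs' inequality bounds `hB q` by the tangent line
`-q log c - (1 - q) log (1 - c)`; adding the convex term `(1 - q)³ log 2` gives a convex majorant,
which on an interval is at most its larger endpoint value. Three intervals with
`c = 5/2⁵, 1/4, 4/9` suffice; these are chosen so that `c` and `1 - c` are again `5`-smooth. -/

/-- The binary entropy function. -/
noncomputable def hB (p : ℝ) : ℝ := -p * Real.log p - (1 - p) * Real.log (1 - p)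

/-- Entropy of the Bernoulli distribution on three-hexes. -/
noncomputable def h3 (p₀ p₁ p₂ p₃ : ℝ) : ℝ :=
  -p₀ * Real.log p₀ - 3 * p₁ * Real.log p₁ - 3 * p₂ * Real.log p₂ -
    p₃ * Real.log p₃

/-- The honeycomb three-hex lower bound (3.1). -/
noncomputable def hH3 (p₀ p₁ p₂ p₃ : ℝ) : ℝ :=
  (1 / 6) * (h3 p₀ p₁ p₂ p₃ +
    (p₀ + 2 * (p₀ + 2 * p₁ + p₂) ^ 3) * Real.log 2)

open Real Set

lemma sub_le_mul_log_sub_log {x y : ℝ} (hx : 0 < x) (hy : 0 < y) :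
    x - y ≤ x * (log x - log y) := by
  have h := one_sub_inv_le_log_of_pos (div_pos hx hy)
  rw [inv_div, log_div hx.ne' hy.ne'] at h
  calc x - y = x * (1 - y / x) := by field_simp
    _ ≤ x * (log x - log y) := mul_le_mul_of_nonneg_left h hx.le

lemma hB_le_of_add_le_one {q c d : ℝ} (hq : q ∈ Ioo 0 1) (hc : 0 < c) (hd : 0 < d)
    (hcd : c + d ≤ 1) : hB q ≤ -q * log c - (1 - q) * log d := by
  have h₁ := sub_le_mul_log_sub_log hq.1 hc
  have h₂ := sub_le_mul_log_sub_log (sub_pos.2 hq.2) hd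
  unfold hB
  linarith

noncomputable def gibbsMajorant (c d q : ℝ) : ℝ :=
  -q * log c - (1 - q) * log d + (1 - q) ^ 3 * log 2

lemma gibbsMajorant_le_max {a b c d q : ℝ} (hab : a < b) (hb : b ≤ 1) (hq : q ∈ Icc a b) :
    gibbsMajorant c d q ≤ max (gibbsMajorant c d a) (gibbsMajorant c d b) := by
  obtain ⟨haq, hqb⟩ := hq
  set M := max (gibbsMajorant c d a) (gibbsMajorant c d b)
  -- `(1 - q)³` lies below its chord over `[a, b]`; `h` is exactly the gap
  have hchord : (b - a) * gibbsMajorant c d q ≤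
      (b - q) * gibbsMajorant c d a + (q - a) * gibbsMajorant c d b := by
    have h : 0 ≤ (b - a) * (b - q) * (q - a) * (3 - a - b - q) * log 2 := by
      have := log_pos one_lt_two
      have : 0 ≤ 3 - a - b - q := by linarith
      positivity
    unfold gibbsMajorant
    linear_combination h
  refine le_of_mul_le_mul_left ?_ (sub_pos.2 hab)
  calc (b - a) * gibbsMajorant c d q
      ≤ (b - q) * gibbsMajorant c d a + (q - a) * gibbsMajorant c d b := hchord
    _ ≤ (b - q) * M + (q - a) * M :=
      add_le_add (mul_le_mul_of_nonneg_left (le_max_left _ _) (sub_nonneg.2 hqb))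
        (mul_le_mul_of_nonneg_left (le_max_right _ _) (sub_nonneg.2 haq))
    _ = (b - a) * M := by ring

lemma hB_add_cube_le_of_mem_Icc {a b c d q M : ℝ} (hq : q ∈ Ioo 0 1) (hqab : q ∈ Icc a b)
    (hab : a < b) (hb : b ≤ 1) (hc : 0 < c) (hd : 0 < d) (hcd : c + d ≤ 1)
    (hMa : gibbsMajorant c d a ≤ M) (hMb : gibbsMajorant c d b ≤ M) :
    hB q + (1 - q) ^ 3 * log 2 ≤ M :=
  calc hB q + (1 - q) ^ 3 * log 2 ≤ gibbsMajorant c d q := by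
        unfold gibbsMajorant
        linarith [hB_le_of_add_le_one hq hc hd hcd]
    _ ≤ M := (gibbsMajorant_le_max hab hb hqab).trans (max_le hMa hMb)

lemma hB_add_cube_le {q : ℝ} (hq : q ∈ Ioo 0 1) : hB q + (1 - q) ^ 3 * log 2 ≤ 0.8666 := by
  have hsplit : q ∈ Icc 0 0.19 ∨ q ∈ Icc 0.19 0.35 ∨ q ∈ Icc 0.35 1 := by
    rcases le_total q 0.19 with h₁ | h₁
    · exact Or.inl ⟨hq.1.le, h₁⟩
    rcases le_total q 0.35 with h₂ | h₂
    exacts [Or.inr (Or.inl ⟨h₁, h₂⟩), Or.inr (Or.inr ⟨h₂, hq.2.le⟩)]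
  rcases hsplit with h | h | h <;>
    [apply hB_add_cube_le_of_mem_Icc hq h (c := 5 / 2 ^ 5) (d := 3 ^ 3 / 2 ^ 5);
     apply hB_add_cube_le_of_mem_Icc hq h (c := 1 / 2 ^ 2) (d := 3 / 2 ^ 2);
     apply hB_add_cube_le_of_mem_Icc hq h (c := 2 ^ 2 / 3 ^ 2) (d := 5 / 3 ^ 2)]
  all_goals try simp [gibbsMajorant, log_div, log_pow]
  all_goals linarith [log_two_gt_d9, log_two_lt_d9, log_three_gt_d9, log_three_lt_d9,
    log_five_gt_d9, log_five_lt_d9]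

lemma hH3_witness :
    0.4303 < hH3 (2 ^ 6 / 5 ^ 3) (3 ^ 3 / (2 * 5 ^ 3)) (2 * 3 / 5 ^ 3) (1 / (2 * 5 ^ 2)) := by
  simp [hH3, h3, log_div, log_mul, log_pow]
  linarith [log_two_gt_d9, log_two_lt_d9, log_three_gt_d9, log_three_lt_d9, log_five_gt_d9,
    log_five_lt_d9]

theorem three_hex_honeycomb_bound :
    (∃ p₀ p₁ p₂ p₃ : ℝ, 0 < p₀ ∧ 0 < p₁ ∧ 0 < p₂ ∧ 0 < p₃ ∧
      p₀ + 3 * p₁ + 3 * p₂ + p₃ = 1 ∧ 0.4303 < hH3 p₀ p₁ p₂ p₃) ∧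
    ∀ q ∈ Set.Ioo (0 : ℝ) 1,
      ∃ p₀ p₁ p₂ p₃ : ℝ, 0 < p₀ ∧ 0 < p₁ ∧ 0 < p₂ ∧ 0 < p₃ ∧
        p₀ + 3 * p₁ + 3 * p₂ + p₃ = 1 ∧
        (1 / 2) * (hB q + (1 - q) ^ 3 * Real.log 2) - 0.003 <
          hH3 p₀ p₁ p₂ p₃ := by
  have hsum : (2 ^ 6 / 5 ^ 3 : ℝ) + 3 * (3 ^ 3 / (2 * 5 ^ 3)) + 3 * (2 * 3 / 5 ^ 3) +
      1 / (2 * 5 ^ 2) = 1 := by norm_num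
  refine ⟨⟨_, _, _, _, by norm_num, by norm_num, by norm_num, by norm_num, hsum, hH3_witness⟩,
    fun q hq => ⟨_, _, _, _, by norm_num, by norm_num, by norm_num, by norm_num, hsum, ?_⟩⟩
  linarith [hB_add_cube_le hq, hH3_witness]
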